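/- (The gap sequence of E_{m,1} is Θ₁.) For every m ≥ 1 and every p ≥ 1: L(E_{m,1},p+1) − L(E_{m,1},p) = 2^m if Θ₁[p] = a, and L(E_{m,1},p+1) − L(E_{m,1},p) = 2^{m−1} if Θ₁[p] = b. Equivalently, the p-th gap between consecutive occurrences of E_{m,1} equals δ_m when Θ₁[p] = a, and the (p)-th and (p+1)-th occurrences overlap in 2^{m−1} − 1 letters when Θ₁[p] = b. -/

import Mathlib

namespace PD

/-- The period-doubling substitution on the alphabet `Bool`,
where `false` stands for the letter `a` and `true` for the letter `b`:
`σ(a) = ab`, `σ(b) = aa`. -/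
def sub : Bool → List Bool
  | false => [false, true]
  | true  => [false, false]

/-- The substitution applied to a finite word. -/
def subW (w : List Bool) : List Bool := w.flatMap sub

/-- `A m = σ^m(a)`. -/
def A (m : ℕ) : List Bool := subW^[m] [false]

/-- `B m = σ^m(b)`. -/
def B (m : ℕ) : List Bool := subW^[m] [true]

/-- The doubling sequence `D∞` (0-indexed: `D n` is the `(n+1)`-th letter),
the fixed point of `σ` beginning with `a`; `A m` is a prefix of `A (m+1)`,
and `A (n+1)` has length `2^(n+1) > n`. -/
def D (n : ℕ) : Bool := (A (n + 1)).getD n false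

/-- `δ m`, the last letter of `A m`. -/
def delta (m : ℕ) : Bool := (A m).getLastD false

/-- The envelope words (`i ∈ {1,2}`): `E m 1 = A m` minus its last letter,
`E m 2 = A (m-1) ++ (A m` minus its last letter `)`. -/
def E (m i : ℕ) : List Bool :=
  if i = 1 then (A m).dropLast else A (m - 1) ++ (A m).dropLast

/-- `w` occurs at the (1-indexed) position `j` in the finite word `τ`. -/
def OccursIn (w τ : List Bool) (j : ℕ) : Prop :=
  1 ≤ j ∧ (τ.drop (j - 1)).take w.length = w

/-- `w` occurs at the (1-indexed) position `j` in the doubling sequence. -/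
def OccursD (w : List Bool) (j : ℕ) : Prop :=
  1 ≤ j ∧ ∀ k < w.length, D (j - 1 + k) = w.getD k false

/-- `w` is a factor of the doubling sequence. -/
def FactorD (w : List Bool) : Prop := ∃ j, OccursD w j

/-- `L w p`: the (1-indexed) starting position of the `p`-th occurrence of `w`
in the doubling sequence, occurrences being ordered by starting position.
(Each factor occurs infinitely often, so `Nat.nth` enumerates all occurrences
in increasing order.) -/
noncomputable def L (w : List Bool) (p : ℕ) : ℕ := Nat.nth (OccursD w) (p - 1)

/-- The strict total order on envelope words:
`E m₁ i₁ ⊏ E m₂ i₂` iff `m₁ < m₂`, or `m₁ = m₂` and `i₁ < i₂`. -/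
def EnvLt (m₁ i₁ m₂ i₂ : ℕ) : Prop := m₁ < m₂ ∨ (m₁ = m₂ ∧ i₁ < i₂)

/-- `Env(w) = E m i`: the envelope word `E m i` is the `⊏`-minimal envelope
word containing `w` as a factor. -/
def IsEnv (w : List Bool) (m i : ℕ) : Prop :=
  1 ≤ m ∧ (i = 1 ∨ i = 2) ∧ w <:+: E m i ∧
    ∀ m' i', 1 ≤ m' → (i' = 1 ∨ i' = 2) → EnvLt m' i' m i → ¬ w <:+: E m' i'

/-- The substitution `φ₁(a) = a`, `φ₁(b) = bb`. -/
def phi1 : Bool → List Bool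
  | false => [false]
  | true  => [true, true]

/-- `Θ₁ = φ₁(D∞)` (0-indexed): `φ₁(A (n+1))` is a prefix of `Θ₁` of length `> n`. -/
def Theta1 (n : ℕ) : Bool := ((A (n + 1)).flatMap phi1).getD n false

/-- The substitution `φ₂(a) = ab`, `φ₂(b) = acac`, over the alphabet `Fin 3`
where `0` stands for `a`, `1` for `b` and `2` for `c`. -/
def phi2 : Bool → List (Fin 3)
  | false => [0, 1]
  | true  => [0, 2, 0, 2]

/-- `Θ₂ = φ₂(D∞)` (0-indexed). -/
def Theta2 (n : ℕ) : Fin 3 := ((A (n + 1)).flatMap phi2).getD n 0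

/-- `N₁(x,p)`: the number of letters `x` among the first `p` letters of `Θ₁`. -/
def N1 (x : Bool) (p : ℕ) : ℕ := ((List.range p).map Theta1).count x

/-- `N₂(x,p)`: the number of letters `x` among the first `p` letters of `Θ₂`. -/
def N2 (x : Fin 3) (p : ℕ) : ℕ := ((List.range p).map Theta2).count x

end PD

/-!
Write `x_t = D t` (0-indexed). The words `σ^s(a)` and `σ^s(b)` differ only in their last letter,
and `D∞` is the concatenation of the blocks `σ^s(x_t)`, because `x_{2t} = a` and
`x_{2t+1} = ¬x_t`. So `E_{s+1,1} = σ^s(a) σ^s(a)⁻` occurs at every position `2^s t` with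
`x_t = a`, and only there, by induction on `s`: an occurrence of `E_{s+2,1}` starts with one of
`E_{s+1,1}`, at some `2^s u` with `x_u = a`, followed by the letter `δ_{s+1} = ¬δ_s`, which ends
the block `σ^s(x_{u+1})` only if `x_{u+1} = b`, i.e. `u = 2v` with `x_v = a`.
Hence `L(E_{s+1,1}, p) = 2^s z_{p-1} + 1`, where `z` enumerates the positions of `a` in `D∞`.
These positions are the `2t`, together with `2t+1` when `x_t = b`; so the gaps of `z` are `2` for
each letter `a` of `D∞` and `1, 1` for each `b`: the word `φ₁(D∞) = Θ₁` read with `a ↦ 2`,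
`b ↦ 1`.
-/

namespace PD

lemma subW_append (u v : List Bool) : subW (u ++ v) = subW u ++ subW v :=
  List.flatMap_append ..

lemma subW_iterate_append (s : ℕ) (u v : List Bool) :
    subW^[s] (u ++ v) = subW^[s] u ++ subW^[s] v := by
  induction s generalizing u v with
  | zero => rfl
  | succ s ih => simp only [Function.iterate_succ_apply, subW_append, ih]

lemma length_sub (x : Bool) : (sub x).length = 2 := by
  cases x <;> rfl

lemma length_subW (w : List Bool) : (subW w).length = 2 * w.length := by
  simp [subW, length_sub, List.sum_replicate, mul_comm]

lemma length_subW_iterate (s : ℕ) (w : List Bool) :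
    (subW^[s] w).length = 2 ^ s * w.length := by
  induction s generalizing w with
  | zero => simp
  | succ s ih => rw [Function.iterate_succ_apply, ih, length_subW, pow_succ]; ring

lemma length_A (m : ℕ) : (A m).length = 2 ^ m := by
  simp [A, length_subW_iterate]

lemma A_eq_dropLast_append_delta (m : ℕ) : A m = (A m).dropLast ++ [delta m] := by
  have hne : A m ≠ [] := List.ne_nil_of_length_pos (by simp [length_A])
  rw [delta, List.getLastD_eq_getLast?, List.getLast?_eq_some_getLast hne, Option.getD_some,
    List.dropLast_append_getLast hne]

lemma subW_iterate_succ_singleton (s : ℕ) (x : Bool) :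
    subW^[s + 1] [x] = A s ++ subW^[s] [!x] := by
  rw [Function.iterate_succ_apply, show subW [x] = [false] ++ [!x] by cases x <;> rfl,
    subW_iterate_append]
  rfl

lemma subW_iterate_singleton (s : ℕ) (x : Bool) :
    subW^[s] [x] = (A s).dropLast ++ [x ^^ delta s] := by
  induction s generalizing x with
  | zero => cases x <;> rfl
  | succ s ih =>
    have hA : A (s + 1) = (A s ++ (A s).dropLast) ++ [!delta s] := by
      rw [A, subW_iterate_succ_singleton, ih, List.append_assoc, Bool.not_false, Bool.true_xor]
    have hdelta : delta (s + 1) = !delta s := by simp [delta, hA]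
    rw [subW_iterate_succ_singleton, ih, hA, List.dropLast_concat, hdelta, List.append_assoc]
    cases x <;> simp

lemma A_succ (s : ℕ) : A (s + 1) = (A s ++ (A s).dropLast) ++ [!delta s] := by
  rw [A, subW_iterate_succ_singleton, subW_iterate_singleton, List.append_assoc, Bool.not_false,
    Bool.true_xor]

lemma delta_succ (s : ℕ) : delta (s + 1) = !delta s := by
  simp [delta, A_succ]

lemma dropLast_A_succ (s : ℕ) : (A (s + 1)).dropLast = A s ++ (A s).dropLast := by
  rw [A_succ, List.dropLast_concat]

lemma A_prefix_of_le {m m' : ℕ} (h : m ≤ m') : A m <+: A m' := by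
  induction h with
  | refl => exact List.prefix_rfl
  | step _ ih => exact ih.trans (by rw [A_succ, List.append_assoc]; exact List.prefix_append ..)

lemma getD_A_of_le {m m' n : ℕ} (hm : m ≤ m') (hn : n < 2 ^ m) :
    (A m').getD n false = (A m).getD n false := by
  rw [List.getD_eq_getElem _ _
      (by rw [length_A]; exact hn.trans_le (Nat.pow_le_pow_right two_pos hm)),
    List.getD_eq_getElem _ _ (by rwa [length_A])]
  exact ((A_prefix_of_le hm).getElem _).symm

lemma D_eq_getD_A {M n : ℕ} (h : n < 2 ^ M) : D n = (A M).getD n false := by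
  rcases le_total M (n + 1) with hM | hM
  · exact getD_A_of_le hM h
  · exact (getD_A_of_le hM (n.lt_succ_self.trans Nat.lt_two_pow_self)).symm

lemma getD_subW (w : List Bool) {t : ℕ} (ht : t < w.length) {i : ℕ} (hi : i < 2) :
    (subW w).getD (2 * t + i) false = (sub (w.getD t false)).getD i false := by
  induction w generalizing t with
  | nil => simp at ht
  | cons x w ih =>
    rw [subW, List.flatMap_cons]
    cases t with
    | zero =>
      rw [List.getD_append _ _ _ _ (by rw [length_sub]; omega)]
      simp
    | succ t =>
      rw [List.getD_append_right _ _ _ _ (by rw [length_sub]; omega),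
        show 2 * (t + 1) + i - (sub x).length = 2 * t + i by rw [length_sub]; omega]
      exact ih (by simpa using ht)

lemma D_two_mul_add {t i : ℕ} (hi : i < 2) : D (2 * t + i) = (sub (D t)).getD i false := by
  have ht : t < 2 ^ (2 * t) :=
    Nat.lt_two_pow_self.trans_le (Nat.pow_le_pow_right two_pos (by omega))
  rw [D_eq_getD_A (M := 2 * t + 1) (by rw [pow_succ]; omega), A, Function.iterate_succ_apply',
    getD_subW _ (by rwa [← A, length_A]) hi, ← A, ← D_eq_getD_A ht]

lemma D_two_mul (t : ℕ) : D (2 * t) = false := by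
  rw [← add_zero (2 * t), D_two_mul_add two_pos]
  cases D t <;> rfl

lemma D_two_mul_add_one (t : ℕ) : D (2 * t + 1) = !D t := by
  rw [D_two_mul_add one_lt_two]
  cases D t <;> rfl

lemma exists_eq_two_mul_of_D_succ {u : ℕ} (h : D (u + 1) = true) :
    ∃ v, u = 2 * v ∧ D v = false := by
  obtain ⟨v, rfl | rfl⟩ := Nat.even_or_odd' u
  · rw [D_two_mul_add_one, Bool.not_eq_true'] at h
    exact ⟨v, rfl, h⟩
  · rw [show 2 * v + 1 + 1 = 2 * (v + 1) by ring, D_two_mul] at h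
    exact absurd h Bool.false_ne_true

/-- The factor of `D∞` of length `ℓ` starting at the 0-indexed position `n`
(`OccursD` counts positions from 1). -/
def window (n ℓ : ℕ) : List Bool := (List.range ℓ).map fun k => D (n + k)

@[simp] lemma length_window (n ℓ : ℕ) : (window n ℓ).length = ℓ := by simp [window]

lemma window_add (n a b : ℕ) : window n (a + b) = window n a ++ window (n + a) b := by
  simp [window, List.range_add, add_assoc]

lemma window_succ (n ℓ : ℕ) : window n (ℓ + 1) = window n ℓ ++ [D (n + ℓ)] := by
  rw [window_add]
  simp [window]

lemma window_prefix_of_le (n : ℕ) {a b : ℕ} (h : a ≤ b) : window n a <+: window n b := by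
  rw [← Nat.add_sub_cancel' h, window_add]
  exact List.prefix_append ..

lemma occursD_add_one_iff (w : List Bool) (n : ℕ) :
    OccursD w (n + 1) ↔ window n w.length = w := by
  simp only [OccursD, window, Nat.add_sub_cancel, le_add_iff_nonneg_left, zero_le, true_and]
  constructor
  · intro h
    refine List.ext_getElem (by simp) fun k hk _ => ?_
    simp_all
  · rintro h k hk
    rw [← h]
    simp [hk]

lemma window_block (s t : ℕ) : window (2 ^ s * t) (2 ^ s) = subW^[s] [D t] := by
  induction s generalizing t with
  | zero => simp [window]
  | succ s ih =>
    rw [show 2 ^ (s + 1) * t = 2 ^ s * (2 * t) by ring, pow_succ, mul_two, window_add, ih,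
      show 2 ^ s * (2 * t) + 2 ^ s = 2 ^ s * (2 * t + 1) by ring, ih, D_two_mul,
      D_two_mul_add_one, subW_iterate_succ_singleton]
    rfl

lemma A_eq_window (M : ℕ) : A M = window 0 (2 ^ M) := by
  rw [← mul_zero (2 ^ M), window_block, ← mul_zero 2, D_two_mul]
  rfl

lemma window_block_append_last (s t : ℕ) :
    window (2 ^ s * t) (2 ^ s - 1) ++ [D (2 ^ s * t + (2 ^ s - 1))] =
      (A s).dropLast ++ [D t ^^ delta s] := by
  rw [← window_succ, Nat.sub_add_cancel Nat.one_le_two_pow, window_block, subW_iterate_singleton]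

lemma window_block_pred (s t : ℕ) : window (2 ^ s * t) (2 ^ s - 1) = (A s).dropLast :=
  (List.append_inj (window_block_append_last s t) (by simp [length_A])).1

lemma D_block_last (s t : ℕ) : D (2 ^ s * t + (2 ^ s - 1)) = (D t ^^ delta s) := by
  simpa using (List.append_inj' (window_block_append_last s t) rfl).2

lemma E_one (m : ℕ) : E m 1 = (A m).dropLast := if_pos rfl

lemma E_one_succ (s : ℕ) : E (s + 1) 1 = A s ++ (A s).dropLast := by
  rw [E_one, dropLast_A_succ]

lemma length_E_one_succ (s : ℕ) : (E (s + 1) 1).length = 2 ^ s + (2 ^ s - 1) := by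
  simp [E_one_succ, length_A]

lemma window_eq_E_one_succ (s : ℕ) {t : ℕ} (ht : D t = false) :
    window (2 ^ s * t) (2 ^ s + (2 ^ s - 1)) = E (s + 1) 1 := by
  rw [window_add, window_block, ht, show 2 ^ s * t + 2 ^ s = 2 ^ s * (t + 1) by ring,
    window_block_pred, E_one_succ]
  rfl

lemma exists_of_window_eq_E_one_succ (s : ℕ) {n : ℕ}
    (h : window n (2 ^ s + (2 ^ s - 1)) = E (s + 1) 1) : ∃ t, D t = false ∧ n = 2 ^ s * t := by
  induction s generalizing n with
  | zero =>
    rw [show E 1 1 = [false] from rfl] at h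
    exact ⟨n, by simpa [window] using h, by simp⟩
  | succ s ih =>
    have hsplit : window n (2 ^ (s + 1) + (2 ^ (s + 1) - 1)) =
        (window n (2 ^ s + (2 ^ s - 1)) ++ [D (n + (2 ^ s + (2 ^ s - 1)))]) ++
          window (n + (2 ^ s + (2 ^ s - 1) + 1)) (2 ^ (s + 1) - 1) := by
      rw [← window_succ, ← window_add]
      congr 1
      have := Nat.one_le_two_pow (n := s)
      rw [pow_succ]
      omega
    rw [hsplit, E_one_succ] at h
    obtain ⟨hA, -⟩ := List.append_inj' h (by simp [length_A])
    rw [A_eq_dropLast_append_delta, ← E_one] at hA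
    obtain ⟨hpre, hmid⟩ := List.append_inj' hA rfl
    obtain ⟨u, -, rfl⟩ := ih hpre
    rw [show 2 ^ s * u + (2 ^ s + (2 ^ s - 1)) = 2 ^ s * (u + 1) + (2 ^ s - 1) by ring,
      D_block_last, delta_succ, List.singleton_inj, ← Bool.true_xor, Bool.xor_left_inj] at hmid
    obtain ⟨v, rfl, hv⟩ := exists_eq_two_mul_of_D_succ hmid
    exact ⟨v, hv, by ring⟩

lemma occursD_E_one_succ_iff (s j : ℕ) :
    OccursD (E (s + 1) 1) j ↔ ∃ t, D t = false ∧ j = 2 ^ s * t + 1 := by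
  cases j with
  | zero => simp [OccursD]
  | succ n =>
    rw [occursD_add_one_iff, length_E_one_succ]
    constructor
    · intro h
      obtain ⟨t, ht, rfl⟩ := exists_of_window_eq_E_one_succ s h
      exact ⟨t, ht, rfl⟩
    · rintro ⟨t, ht, hn⟩
      rw [Nat.add_right_cancel hn]
      exact window_eq_E_one_succ s ht

/-- `phi1Pos j = |φ₁(x₀ ⋯ x_{j-1})|`, the 0-indexed position in `Θ₁` where the block `φ₁(D j)`
starts. -/
def phi1Pos (j : ℕ) : ℕ := ((window 0 j).flatMap phi1).length

lemma length_phi1_pos (x : Bool) : 0 < (phi1 x).length := by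
  cases x <;> decide

lemma phi1Pos_succ (j : ℕ) : phi1Pos (j + 1) = phi1Pos j + (phi1 (D j)).length := by
  simp [phi1Pos, window_succ]

lemma le_phi1Pos (j : ℕ) : j ≤ phi1Pos j := by
  induction j with
  | zero => simp [phi1Pos, window]
  | succ j ih =>
    have := length_phi1_pos (D j)
    rw [phi1Pos_succ]
    omega

lemma Theta1_eq_getD {N n : ℕ} (hN : N ≤ 2 ^ (n + 1)) (hn : n < phi1Pos N) :
    Theta1 n = ((window 0 N).flatMap phi1).getD n false := by
  have hpre := (window_prefix_of_le 0 hN).flatMap phi1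
  rw [Theta1, A_eq_window, List.getD_eq_getElem _ _ (hn.trans_le hpre.length_le),
    List.getD_eq_getElem _ _ hn]
  exact (hpre.getElem hn).symm

lemma Theta1_phi1Pos_add (j : ℕ) {i : ℕ} (hi : i < (phi1 (D j)).length) :
    Theta1 (phi1Pos j + i) = (phi1 (D j)).getD i false := by
  have hj : j + 1 ≤ 2 ^ (phi1Pos j + i + 1) :=
    Nat.lt_two_pow_self.le.trans (Nat.pow_le_pow_right two_pos (by have := le_phi1Pos j; omega))
  rw [Theta1_eq_getD hj (by rw [phi1Pos_succ]; omega), window_succ, zero_add, List.flatMap_append,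
    List.flatMap_singleton, List.getD_append_right _ _ _ _ (by simp [phi1Pos]), phi1Pos,
    Nat.add_sub_cancel_left]

lemma exists_eq_phi1Pos_add (q : ℕ) :
    ∃ j i, i < (phi1 (D j)).length ∧ q = phi1Pos j + i := by
  induction q with
  | zero => exact ⟨0, 0, length_phi1_pos _, rfl⟩
  | succ q ih =>
    obtain ⟨j, i, hi, rfl⟩ := ih
    by_cases hlast : i + 1 < (phi1 (D j)).length
    · exact ⟨j, i + 1, hlast, rfl⟩
    · refine ⟨j + 1, 0, length_phi1_pos _, ?_⟩
      rw [phi1Pos_succ]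
      omega

lemma count_D_eq_false_two_mul (j : ℕ) :
    Nat.count (fun t => D t = false) (2 * j) = phi1Pos j := by
  induction j with
  | zero => simp [phi1Pos, window]
  | succ j ih =>
    rw [show 2 * (j + 1) = 2 * j + 1 + 1 by ring, Nat.count_succ, Nat.count_succ, ih,
      phi1Pos_succ, D_two_mul, D_two_mul_add_one]
    cases D j <;> simp [phi1]

lemma nth_D_eq_false_phi1Pos_add (j : ℕ) {i : ℕ} (hi : i < (phi1 (D j)).length) :
    Nat.nth (fun t => D t = false) (phi1Pos j + i) = 2 * j + i := by
  obtain rfl | ⟨rfl, hj⟩ : i = 0 ∨ (i = 1 ∧ D j = true) := by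
    cases h : D j <;> simp [h, phi1] at hi ⊢ <;> omega
  · rw [add_zero, add_zero, ← count_D_eq_false_two_mul]
    exact Nat.nth_count (D_two_mul j)
  · have hcount : Nat.count (fun t => D t = false) (2 * j + 1) = phi1Pos j + 1 := by
      rw [Nat.count_succ, count_D_eq_false_two_mul, if_pos (D_two_mul j)]
    rw [← hcount]
    exact Nat.nth_count (by rw [D_two_mul_add_one, hj]; rfl)

lemma nth_D_eq_false_succ (q : ℕ) :
    Nat.nth (fun t => D t = false) (q + 1) =
      Nat.nth (fun t => D t = false) q + if Theta1 q then 1 else 2 := by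
  obtain ⟨j, i, hi, rfl⟩ := exists_eq_phi1Pos_add q
  have hnext := nth_D_eq_false_phi1Pos_add (j + 1) (length_phi1_pos (D (j + 1)))
  rw [phi1Pos_succ] at hnext
  rw [nth_D_eq_false_phi1Pos_add j hi, Theta1_phi1Pos_add j hi]
  cases hD : D j <;> rw [hD] at hi hnext
  · obtain rfl : i = 0 := Nat.lt_one_iff.mp hi
    simpa [phi1, mul_add, add_assoc] using hnext
  · obtain rfl | rfl : i = 0 ∨ i = 1 := by change i < 2 at hi; omega
    · simpa [phi1] using nth_D_eq_false_phi1Pos_add j (i := 1) (by rw [hD]; exact one_lt_two)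
    · simpa [phi1, mul_add, add_assoc] using hnext

lemma L_E_one_succ (s p : ℕ) :
    L (E (s + 1) 1) p = 2 ^ s * Nat.nth (fun t => D t = false) (p - 1) + 1 := by
  set f : ℕ → ℕ := fun t => 2 ^ s * t + 1
  have hf : StrictMono f := fun a b hab => by simpa [f] using hab
  have hocc (j : ℕ) : OccursD (E (s + 1) 1) j ↔ ∃ t, D t = false ∧ j = f t :=
    occursD_E_one_succ_iff s j
  have hpull : (fun t => OccursD (E (s + 1) 1) (f t)) = fun t => D t = false := by
    funext t
    simp only [hocc, hf.injective.eq_iff, exists_eq_right']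
  have hinf : (Set.ofPred (OccursD (E (s + 1) 1))).Infinite :=
    Set.infinite_of_injective_forall_mem (f := fun t => f (2 * t))
      (hf.injective.comp fun a b h => by simpa using h)
      fun t => (hocc _).2 ⟨2 * t, D_two_mul t, rfl⟩
  rw [L, ← Nat.nth_comp_of_strictMono hf (fun k hk => by
      obtain ⟨t, -, rfl⟩ := (hocc k).1 hk
      exact ⟨t, rfl⟩) (fun hfin => absurd hfin hinf), hpull]

end PD

open PD
/-- The gap sequence of `E m 1` is `Θ₁`: for `m ≥ 1` and `p ≥ 1`, the distance
between the `p`-th and `(p+1)`-th occurrences of `E m 1` is `2^m` when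
`Θ₁[p] = a` (so the gap is the single letter `δ_m`) and `2^(m-1)` when
`Θ₁[p] = b` (so consecutive occurrences overlap in `2^(m-1) − 1` letters). -/
theorem doubling_gap_sequence_E1 (m : ℕ) (hm : 1 ≤ m) (p : ℕ) (hp : 1 ≤ p) :
    (Theta1 (p - 1) = false → L (E m 1) (p + 1) - L (E m 1) p = 2 ^ m) ∧
      (Theta1 (p - 1) = true → L (E m 1) (p + 1) - L (E m 1) p = 2 ^ (m - 1)) := by
  obtain ⟨s, rfl⟩ : ∃ s, m = s + 1 := ⟨m - 1, by omega⟩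
  obtain ⟨q, rfl⟩ : ∃ q, p = q + 1 := ⟨p - 1, by omega⟩
  have hgap : L (E (s + 1) 1) (q + 1 + 1) - L (E (s + 1) 1) (q + 1) =
      2 ^ s * if Theta1 q then 1 else 2 := by
    rw [L_E_one_succ, L_E_one_succ, Nat.add_sub_cancel, Nat.add_sub_cancel, nth_D_eq_false_succ,
      mul_add]
    omega
  rw [hgap, Nat.add_sub_cancel, Nat.add_sub_cancel]
  constructor <;> intro h <;> simp [h, pow_succ]
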